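/- arXiv:1302.3507 — 5 statements merged into one kernel-verified Lean document; each statement's English description precedes it below -/
import Mathlib

section
/- Let H(p) = p·log p + (1−p)·log(1−p). For every positive integer m and every real p ∈ (0,1) such that p·m is an integer, one has √(2π)/e² ≤ C(m, pm)·√(m·p·(1−p))·e^{m·H(p)} ≤ e/(2π), where C(m, pm) is the binomial coefficient. -/
/-!
Write `n! = σ n · √(2n) (n/e)^n` with `σ = Stirling.stirlingSeq`. For `r = pm` and `s = (1-p)m`
the powers of `e` in `m!/(r! s!)` cancel, and `r^r s^s / m^m = exp (m H(p))`, so the quantity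
in question is exactly `τ m / (τ r · τ s)` with `τ = √2 σ`. Since `σ` decreases from
`σ 1 = e/√2` to its limit `√π`, every `τ n` with `n ≥ 1` lies in `[√(2π), e]`.
-/

open Real Nat

namespace Stirling

lemma sqrt_two_mul_stirlingSeq_le_exp_one {n : ℕ} (hn : n ≠ 0) :
    √2 * stirlingSeq n ≤ exp 1 := by
  obtain ⟨k, rfl⟩ := Nat.exists_eq_succ_of_ne_zero hn
  have h := stirlingSeq'_antitone (Nat.zero_le k)
  simp only [Function.comp_apply, stirlingSeq_one] at h
  rwa [le_div_iff₀ (by positivity), mul_comm] at h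

lemma factorial_eq_stirlingSeq_mul {n : ℕ} (hn : n ≠ 0) :
    (n ! : ℝ) = stirlingSeq n * (√(2 * n) * (n / exp 1) ^ n) := by
  rw [stirlingSeq, div_mul_cancel₀]
  positivity

lemma stirlingSeq_pos {n : ℕ} (hn : n ≠ 0) : 0 < stirlingSeq n :=
  (sqrt_pos.2 pi_pos).trans_le (sqrt_pi_le_stirlingSeq hn)

lemma add_choose_mul_eq_stirlingSeq {r s : ℕ} (hr : r ≠ 0) (hs : s ≠ 0) :
    ((r + s).choose r : ℝ) * √(r * s / (r + s : ℕ)) *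
        (r ^ r * s ^ s / (r + s : ℕ) ^ (r + s)) =
      √2 * stirlingSeq (r + s) / ((√2 * stirlingSeq r) * (√2 * stirlingSeq s)) := by
  have hrs : r + s ≠ 0 := by omega
  rw [cast_add_choose, factorial_eq_stirlingSeq_mul hr, factorial_eq_stirlingSeq_mul hs,
    factorial_eq_stirlingSeq_mul hrs, div_pow, div_pow, div_pow, pow_add (exp 1),
    sqrt_div' _ (cast_nonneg _), sqrt_mul (cast_nonneg _), sqrt_mul zero_le_two,
    sqrt_mul zero_le_two, sqrt_mul zero_le_two]
  have := stirlingSeq_pos hr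
  have := stirlingSeq_pos hs
  field_simp

lemma sqrt_two_mul_stirlingSeq_mem_Icc {n : ℕ} (hn : n ≠ 0) :
    √2 * stirlingSeq n ∈ Set.Icc (√(2 * π)) (exp 1) :=
  ⟨by
    rw [sqrt_mul zero_le_two]
    exact mul_le_mul_of_nonneg_left (sqrt_pi_le_stirlingSeq hn) (sqrt_nonneg 2),
    sqrt_two_mul_stirlingSeq_le_exp_one hn⟩

end Stirling

lemma div_mul_mem_Icc {a b c lo hi : ℝ} (hlo : 0 < lo) (ha : a ∈ Set.Icc lo hi)
    (hb : b ∈ Set.Icc lo hi) (hc : c ∈ Set.Icc lo hi) :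
    a / (b * c) ∈ Set.Icc (lo / (hi * hi)) (hi / (lo * lo)) := by
  obtain ⟨ha, ha'⟩ := ha
  obtain ⟨hb, hb'⟩ := hb
  obtain ⟨hc, hc'⟩ := hc
  have : 0 < b * c := mul_pos (hlo.trans_le hb) (hlo.trans_le hc)
  constructor <;> gcongr <;> linarith

open Stirling

lemma pow_mul_pow_div_pow_eq_exp {p m : ℝ} {r s : ℕ} (hp0 : 0 < p) (hp1 : p < 1) (hm : m ≠ 0)
    (hr : (r : ℝ) = p * m) (hs : (s : ℝ) = (1 - p) * m) :
    (r : ℝ) ^ r * s ^ s / m ^ (r + s) = exp (m * (p * log p + (1 - p) * log (1 - p))) := by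
  have hexp : m * (p * log p + (1 - p) * log (1 - p)) = r * log p + s * log (1 - p) := by
    rw [hr, hs]; ring
  rw [hexp, exp_add, exp_nat_mul, exp_nat_mul, exp_log hp0, exp_log (by linarith), hr, hs,
    mul_pow, mul_pow, pow_add]
  field_simp

/-- Stirling-type estimates for the binomial coefficient.
`H(p) = p log p + (1-p) log (1-p)`; `r = p·m` is the integer value of `p·m`. -/
theorem stmt3 (m : ℕ) (hm : 0 < m) (p : ℝ) (hp0 : 0 < p) (hp1 : p < 1)
    (r : ℕ) (hr : (r : ℝ) = p * m) :
    Real.sqrt (2 * Real.pi) / Real.exp 2 ≤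
      (m.choose r : ℝ) * Real.sqrt (m * p * (1 - p)) *
        Real.exp (m * (p * Real.log p + (1 - p) * Real.log (1 - p))) ∧
    (m.choose r : ℝ) * Real.sqrt (m * p * (1 - p)) *
        Real.exp (m * (p * Real.log p + (1 - p) * Real.log (1 - p))) ≤
      Real.exp 1 / (2 * Real.pi) := by
  have hmR : (0 : ℝ) < m := cast_pos.2 hm
  have hrm : r ≤ m := by exact_mod_cast (show (r : ℝ) ≤ m by rw [hr]; nlinarith)
  obtain ⟨s, rfl⟩ := Nat.exists_eq_add_of_le hrm
  have hs : (s : ℝ) = (1 - p) * (r + s : ℕ) := by push_cast at hr ⊢; linarith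
  have hr0 : r ≠ 0 := by rw [← cast_ne_zero (R := ℝ), hr]; positivity
  have hs0 : s ≠ 0 := by
    rw [← cast_ne_zero (R := ℝ), hs]; exact mul_ne_zero (by linarith) hmR.ne'
  have hvar : (r : ℝ) * s / (r + s : ℕ) = (r + s : ℕ) * p * (1 - p) := by
    rw [hr, hs]; field_simp
  rw [← hvar, ← pow_mul_pow_div_pow_eq_exp hp0 hp1 hmR.ne' hr hs,
    add_choose_mul_eq_stirlingSeq hr0 hs0]
  have hbounds := div_mul_mem_Icc (sqrt_pos.2 (by positivity))
    (sqrt_two_mul_stirlingSeq_mem_Icc (n := r + s) (by omega))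
    (sqrt_two_mul_stirlingSeq_mem_Icc hr0) (sqrt_two_mul_stirlingSeq_mem_Icc hs0)
  rwa [mul_self_sqrt (by positivity), ← exp_add, one_add_one_eq_two] at hbounds
end

section
/- Let d₁, d₂, N be positive integers and K a real number such that 1 ≤ d₁ ≤ 2N/3, 1 ≤ d₂ ≤ 2N/3, and 1 ≤ K ≤ d₁d₂/(100N), and set Δ = √(d₁·d₂·K/N). Then for every integer t satisfying d₁d₂/N + Δ ≤ t ≤ d₁d₂/N + 2Δ, one has C(d₁, t)·C(N−d₁, d₂−t) / C(N, d₂) ≥ 4·e^{−40K} / √(d₁d₂/N + Δ). -/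
/-!
Take logarithms. The effective Stirling bounds `√(2πm) (m/e)^m ≤ m! ≤ e √m (m/e)^m` turn the
logarithm of the hypergeometric probability into an entropy term plus `½ log` corrections.
Viewing `(t, d₁ - t, d₂ - t, N - d₁ - d₂ + t)` as a 2 × 2 contingency table, the entropy term is
minus the relative entropy of the table with respect to its independence model, which
`log x ≤ x - 1` bounds by Pearson's χ² statistic; with `μ = d₁d₂/N` and `|t - μ| ≤ 2Δ` this is at
most `9 (t - μ)² / μ ≤ 36 K`. The `½ log` corrections cost at most `½ log (9t) ≤ ½ log (12 (μ + Δ))`,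
and the constants fit because `12 e² ≤ π⁴`.
-/

open Real
open scoped Nat

noncomputable def stirlingLog (x : ℝ) : ℝ := x * log x - x + log x / 2

theorem log_two_mul_pi_div_two_add_stirlingLog_le {n : ℕ} (hn : n ≠ 0) :
    log (2 * π) / 2 + stirlingLog n ≤ log n ! := by
  have := Stirling.le_log_factorial_stirling hn
  unfold stirlingLog
  linarith

theorem log_factorial_le_stirlingLog_add_one (n : ℕ) : log n ! ≤ stirlingLog n + 1 := by
  obtain rfl | hn := eq_or_ne n 0
  · simp [stirlingLog]
  obtain ⟨m, rfl⟩ := Nat.exists_eq_succ_of_ne_zero hn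
  have h := log_le_log (Stirling.stirlingSeq'_pos m)
    (Stirling.stirlingSeq'_antitone (Nat.zero_le m))
  simp only [Function.comp_apply, Stirling.stirlingSeq_one, Stirling.log_stirlingSeq_formula] at h
  rw [log_div (exp_ne_zero 1) (by positivity), log_exp, log_sqrt zero_le_two,
    log_mul two_ne_zero (by positivity), log_div (by positivity) (exp_ne_zero 1), log_exp] at h
  unfold stirlingLog
  linarith

theorem log_choose_mul_choose_div_choose {a b n t : ℕ} (hta : t ≤ a) (hbn : b ≤ n)
    (hq : b - t ≤ n - a) :
    log ((a.choose t : ℝ) * (n - a).choose (b - t) / n.choose b) =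
      log a ! + log (n - a)! + log b ! + log (n - b)!
        - (log t ! + log (a - t)! + log (b - t)! + log (n - a - (b - t))! + log n !) := by
  rw [Nat.cast_choose ℝ hta, Nat.cast_choose ℝ hq, Nat.cast_choose ℝ hbn]
  simp only [ne_eq, div_eq_zero_iff, mul_eq_zero, Nat.cast_eq_zero, Nat.factorial_ne_zero,
    or_self, not_false_eq_true, log_div, log_mul]
  ring

theorem log_choose_mul_choose_div_choose_ge_stirlingLog {a b n t : ℕ} (ht : 0 < t) (hta : t < a)
    (htb : t < b) (hq : a + b < n + t) :
    2 * log (2 * π) - 5 + stirlingLog a + stirlingLog (n - a) + stirlingLog b + stirlingLog (n - b)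
        - (stirlingLog t + stirlingLog (a - t) + stirlingLog (b - t)
          + stirlingLog (n - a - b + t) + stirlingLog n) ≤
      log ((a.choose t : ℝ) * (n - a).choose (b - t) / n.choose b) := by
  have lower {m : ℕ} {x : ℝ} (hm : m ≠ 0) (hx : (m : ℝ) = x) :
      log (2 * π) / 2 + stirlingLog x ≤ log m ! :=
    hx ▸ log_two_mul_pi_div_two_add_stirlingLog_le hm
  have upper {m : ℕ} {x : ℝ} (hx : (m : ℝ) = x) : log m ! ≤ stirlingLog x + 1 :=
    hx ▸ log_factorial_le_stirlingLog_add_one m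
  have cast_sub {x y : ℕ} (h : y ≤ x) : ((x - y : ℕ) : ℝ) = x - y := Nat.cast_sub h
  have hcell : ((n - a - (b - t) : ℕ) : ℝ) = n - a - b + t := by
    rw [cast_sub (by omega), cast_sub (by omega), cast_sub (by omega)]; ring
  rw [log_choose_mul_choose_div_choose hta.le (by omega) (by omega)]
  linarith [lower (m := a) (by omega) rfl, lower (m := n - a) (by omega) (cast_sub (by omega)),
    lower (m := b) (by omega) rfl, lower (m := n - b) (by omega) (cast_sub (by omega)),
    upper (m := t) rfl, upper (m := a - t) (cast_sub (by omega)),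
    upper (m := b - t) (cast_sub (by omega)), upper hcell, upper (m := n) rfl]

theorem mul_log_sub_mul_log_le {x m : ℝ} (hx : 0 < x) (hm : 0 < m) :
    x * log x - x * log m ≤ x ^ 2 / m - x := by
  have h := mul_le_mul_of_nonneg_left (log_le_sub_one_of_pos (div_pos hx hm)) hx.le
  rw [log_div hx.ne' hm.ne'] at h
  calc x * log x - x * log m = x * (log x - log m) := by ring
    _ ≤ x * (x / m - 1) := h
    _ = x ^ 2 / m - x := by field_simp

/-- Pearson's χ² statistic of the 2 × 2 contingency table with total `n`, row sums `a, n - a`,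
column sums `b, n - b` and top-left entry `t`. -/
noncomputable def chiSq (a b n t : ℝ) : ℝ :=
  n * (t * n - a * b) ^ 2 / (a * (n - a) * b * (n - b))

theorem neg_chiSq_le_sum_mul_log {a b n t : ℝ} (ht : 0 < t) (hta : t < a) (htb : t < b)
    (hq : a + b < n + t) :
    -chiSq a b n t ≤ a * log a + (n - a) * log (n - a) + b * log b + (n - b) * log (n - b)
      - (t * log t + (a - t) * log (a - t) + (b - t) * log (b - t)
        + (n - a - b + t) * log (n - a - b + t) + n * log n) := by
  have ha : 0 < a := by linarith
  have hb : 0 < b := by linarith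
  have hn : 0 < n := by linarith
  have hna : 0 < n - a := by linarith
  have hnb : 0 < n - b := by linarith
  -- compare each cell with its expected count `r * c / n` under independence
  have cell {x r c : ℝ} (hx : 0 < x) (hr : 0 < r) (hc : 0 < c) :
      x * log x - x * (log r + log c - log n) ≤ x ^ 2 * n / (r * c) - x := by
    have h := mul_log_sub_mul_log_le hx (show 0 < r * c / n by positivity)
    rwa [log_div (by positivity) hn.ne', log_mul hr.ne' hc.ne', div_div_eq_mul_div] at h
  have hχ : t ^ 2 * n / (a * b) + (a - t) ^ 2 * n / (a * (n - b)) + (b - t) ^ 2 * n / ((n - a) * b)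
      + (n - a - b + t) ^ 2 * n / ((n - a) * (n - b)) - n = chiSq a b n t := by
    unfold chiSq
    field_simp
    ring
  linarith [cell ht ha hb, cell (sub_pos.2 hta) ha hnb, cell (sub_pos.2 htb) hna hb,
    cell (show 0 < n - a - b + t by linarith) hna hnb]

theorem chiSq_le_of_three_mul_le_two_mul {a b n t : ℝ} (ha : 0 < a) (hb : 0 < b) (ha' : 3 * a ≤ 2 * n)
    (hb' : 3 * b ≤ 2 * n) : chiSq a b n t ≤ (t - a * b / n) ^ 2 / (a * b / n) * 9 := by
  have hn : 0 < n := by linarith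
  have hmargins : n ^ 2 / ((n - a) * (n - b)) ≤ 9 := by
    rw [div_le_iff₀ (by nlinarith)]
    nlinarith
  calc chiSq a b n t = (t - a * b / n) ^ 2 / (a * b / n) * (n ^ 2 / ((n - a) * (n - b))) := by
        unfold chiSq; field_simp
    _ ≤ (t - a * b / n) ^ 2 / (a * b / n) * 9 := by gcongr

theorem exp_le_choose_mul_choose_div_choose {a b n t : ℕ} (ht : 0 < t) (hta : t < a)
    (htb : t < b) (hq : a + b < n + t) (ha : 3 * a ≤ 2 * n) (hb : 3 * b ≤ 2 * n) :
    exp (2 * log (2 * π) - 5 - (t - a * b / n) ^ 2 / (a * b / n) * 9 - log (9 * t) / 2) ≤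
      (a.choose t : ℝ) * (n - a).choose (b - t) / n.choose b := by
  have hP : 0 < (a.choose t : ℝ) * (n - a).choose (b - t) / n.choose b := by
    have := Nat.choose_pos hta.le
    have := Nat.choose_pos (show b - t ≤ n - a by omega)
    have := Nat.choose_pos (show b ≤ n by omega)
    positivity
  rw [← le_log_iff_exp_le hP]
  have hstirling := log_choose_mul_choose_div_choose_ge_stirlingLog ht hta htb hq
  have ht' : (0 : ℝ) < t := by exact_mod_cast ht
  have hta' : (t : ℝ) < a := by exact_mod_cast hta
  have htb' : (t : ℝ) < b := by exact_mod_cast htb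
  have hq' : (a : ℝ) + b < n + t := by exact_mod_cast hq
  have ha' : 3 * (a : ℝ) ≤ 2 * n := by exact_mod_cast ha
  have hb' : 3 * (b : ℝ) ≤ 2 * n := by exact_mod_cast hb
  have hentropy := neg_chiSq_le_sum_mul_log ht' hta' htb' hq'
  have hχ := chiSq_le_of_three_mul_le_two_mul (t := (t : ℝ)) (by linarith) (by linarith) ha' hb'
  have hlog_at : log (a - t) ≤ log a := log_le_log (by linarith) (by linarith)
  have hlog_bt : log (b - t) ≤ log b := log_le_log (by linarith) (by linarith)
  have hlog_cell : log (n - a - b + t) ≤ log n := log_le_log (by linarith) (by linarith)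
  have hlog_na : log n ≤ log 3 + log (n - a) := by
    rw [← log_mul (by norm_num) (by linarith)]; exact log_le_log (by linarith) (by linarith)
  have hlog_nb : log n ≤ log 3 + log (n - b) := by
    rw [← log_mul (by norm_num) (by linarith)]; exact log_le_log (by linarith) (by linarith)
  have hlog_9t : log (9 * t) = 2 * log 3 + log t := by
    rw [log_mul (by norm_num) ht'.ne', show (9 : ℝ) = 3 ^ 2 by norm_num, log_pow]; push_cast; ring
  unfold stirlingLog at hstirling
  linarith

theorem log_four_add_log_twelve_div_two_add_one_le :
    log 4 + log 12 / 2 + 1 ≤ 2 * log (2 * π) := by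
  have he : exp 2 < 2.7182818286 ^ 2 := by
    rw [show (2 : ℝ) = 1 + 1 by norm_num, exp_add, ← sq]
    exact pow_lt_pow_left₀ exp_one_lt_d9 (exp_pos 1).le two_ne_zero
  have hπ : 3.14 ^ 4 < π ^ 4 := pow_lt_pow_left₀ pi_gt_d2 (by norm_num) (by norm_num)
  have h : log (12 * exp 2) ≤ log (π ^ 4) :=
    log_le_log (by positivity) (by norm_num at he hπ ⊢; linarith)
  rw [log_mul (by norm_num) (exp_ne_zero 2), log_exp, log_pow] at h
  have h4 : log 4 = 2 * log 2 := by
    rw [show (4 : ℝ) = 2 ^ 2 by norm_num, log_pow]; push_cast; ring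
  rw [h4, log_mul two_ne_zero pi_ne_zero]
  push_cast at h
  linarith

theorem add_lt_add_mul_div {a b n : ℝ} (hn : 0 < n) (ha : a < n) (hb : b < n) :
    a + b < n + a * b / n := by
  have h : n + a * b / n - (a + b) = (n - a) * (n - b) / n := by field_simp; ring
  linarith [div_pos (mul_pos (sub_pos.2 ha) (sub_pos.2 hb)) hn]

/-- pointwise lower bound for the hypergeometric probability at
`t` with `d₁d₂/N + Δ ≤ t ≤ d₁d₂/N + 2Δ`, where `Δ = √(d₁d₂K/N)`. -/
theorem stmt5 (d₁ d₂ N : ℕ) (K : ℝ)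
    (hd₁ : 1 ≤ d₁) (hd₁' : (d₁ : ℝ) ≤ 2 * N / 3)
    (hd₂ : 1 ≤ d₂) (hd₂' : (d₂ : ℝ) ≤ 2 * N / 3)
    (hK1 : 1 ≤ K) (hK2 : K ≤ (d₁ : ℝ) * d₂ / (100 * N))
    (t : ℕ)
    (ht1 : (d₁ : ℝ) * d₂ / N + Real.sqrt ((d₁ : ℝ) * d₂ * K / N) ≤ (t : ℝ))
    (ht2 : (t : ℝ) ≤ (d₁ : ℝ) * d₂ / N + 2 * Real.sqrt ((d₁ : ℝ) * d₂ * K / N)) :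
    4 * Real.exp (-40 * K) /
        Real.sqrt ((d₁ : ℝ) * d₂ / N + Real.sqrt ((d₁ : ℝ) * d₂ * K / N)) ≤
      (d₁.choose t : ℝ) * ((N - d₁).choose (d₂ - t) : ℝ) / (N.choose d₂ : ℝ) := by
  set μ : ℝ := d₁ * d₂ / N with hμ
  set Δ : ℝ := √(d₁ * d₂ * K / N) with hΔ
  have hN : (0 : ℝ) < N := by linarith [(by exact_mod_cast hd₁ : (1 : ℝ) ≤ d₁)]
  have hμK : 100 * K ≤ μ := by
    rw [hμ, le_div_iff₀ hN]; rw [le_div_iff₀ (by positivity)] at hK2; linarith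
  have hΔsq : Δ ^ 2 = μ * K := by rw [hΔ, sq_sqrt (by positivity)]; ring
  have hΔμ : 10 * Δ ≤ μ := by nlinarith [sqrt_nonneg (d₁ * d₂ * K / N)]
  have hμd₁ : 3 * μ ≤ 2 * d₁ := by rw [hμ, mul_div_assoc', div_le_iff₀ hN]; nlinarith
  have hμd₂ : 3 * μ ≤ 2 * d₂ := by rw [hμ, mul_div_assoc', div_le_iff₀ hN]; nlinarith
  have hcell : (d₁ : ℝ) + d₂ < N + μ := add_lt_add_mul_div hN (by linarith) (by linarith)
  have htable : 0 < t ∧ t < d₁ ∧ t < d₂ ∧ d₁ + d₂ < N + t ∧ 3 * d₁ ≤ 2 * N ∧ 3 * d₂ ≤ 2 * N := by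
    have : (0 : ℝ) < t ∧ (t : ℝ) < d₁ ∧ (t : ℝ) < d₂ ∧ (d₁ : ℝ) + d₂ < N + t ∧
        3 * (d₁ : ℝ) ≤ 2 * N ∧ 3 * (d₂ : ℝ) ≤ 2 * N := by
      refine ⟨?_, ?_, ?_, ?_, ?_, ?_⟩ <;> linarith [sqrt_nonneg (d₁ * d₂ * K / N)]
    exact_mod_cast this
  obtain ⟨ht, htd₁, htd₂, hq, h3d₁, h3d₂⟩ := htable
  have hbound := exp_le_choose_mul_choose_div_choose ht htd₁ htd₂ hq h3d₁ h3d₂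
  rw [← hμ] at hbound
  have hχ : (t - μ) ^ 2 / μ * 9 ≤ 36 * K := by
    rw [div_mul_eq_mul_div, div_le_iff₀ (by linarith)]; nlinarith
  have hμΔ : 0 < μ + Δ := by linarith
  have h9t : log (9 * t) ≤ log 12 + log (μ + Δ) := by
    rw [← log_mul (by norm_num) hμΔ.ne']; exact log_le_log (by positivity) (by linarith)
  calc 4 * exp (-40 * K) / √(μ + Δ) = exp (log 4 + -40 * K - log (μ + Δ) / 2) := by
        rw [exp_sub, exp_add, exp_log four_pos, ← log_sqrt hμΔ.le, exp_log (sqrt_pos.2 hμΔ)]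
    _ ≤ _ := exp_le_exp.2 (by linarith [log_four_add_log_twelve_div_two_add_one_le])
    _ ≤ _ := hbound
end

section
/- Fix an integer k ≥ 2 and set N = C(n − ⌊n/k⌋, k − 1). Let p = p(n) and q = q(n) satisfy 0 < p ≤ q ≤ 1/2, N·p(n) → ∞ as n → ∞, and p q N ≤ (1/30) log n; set γ = (log n)/(p q N) and assume p N < (log n)/(5 log γ). Let B be a finite set and let N₁, …, N_s ⊆ B be s ≥ n^{1/3} pairwise disjoint subsets, each of size m(n) with m(n)/(N p) → 1 as n → ∞. Let B_q be the random subset of B obtained by including each element of B independently with probability q. Then for every fixed s' > 0, for all sufficiently large n, with probability at least 1 − n^{−s'} there exists an index i with N_i ⊆ B_q. -/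
open MeasureTheory Finset Filter

/-- Bernoulli measure on `Bool` with success probability `p`. -/
noncomputable def bern (p : ℝ) : Measure Bool :=
  ENNReal.ofReal p • Measure.dirac true + ENNReal.ofReal (1 - p) • Measure.dirac false

/-- `N = C(n - ⌊n/k⌋, k - 1)`. -/
def Nk (k n : ℕ) : ℕ := (n - n / k).choose (k - 1)

/-!
The events `Nᵢ ⊆ B_q` live on disjoint coordinates, so they are independent and none of them
occurs with probability `(1 - q^m)^s ≤ exp (-s q^m)`. The sparsity assumptions give
`q⁻¹ ≤ γ` and `m log q⁻¹ ≤ (3/2) p N log γ < (3/10) log n`, hence `q^m ≥ n^(-3/10)` and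
`s q^m ≥ n^(1/30)`, which eventually exceeds `s' log n`.
-/

open ProbabilityTheory Real Function Asymptotics

section Bernoulli

variable {q : ℝ}

lemma bern_singleton_true : bern q {true} = ENNReal.ofReal q := by
  simp [bern]

lemma isProbabilityMeasure_bern (h0 : 0 ≤ q) (h1 : q ≤ 1) : IsProbabilityMeasure (bern q) :=
  ⟨by simp [bern, ← ENNReal.ofReal_add h0 (sub_nonneg.2 h1)]⟩

variable {ι : Type*} [Fintype ι]

lemma measure_pi_bern_forall_true (h0 : 0 ≤ q) (h1 : q ≤ 1) (B : Finset ι) :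
    Measure.pi (fun _ : ι => bern q) {ω | ∀ x ∈ B, ω x = true} = ENNReal.ofReal q ^ #B := by
  have := isProbabilityMeasure_bern h0 h1
  have hpi : {ω : ι → Bool | ∀ x ∈ B, ω x = true} = (B : Set ι).pi fun _ => {true} := by
    ext ω; simp [Set.mem_pi]
  rw [hpi, Measure.pi_pi_finset, bern_singleton_true, prod_const]

lemma iIndepSet_pi_bern_forall_true (h0 : 0 ≤ q) (h1 : q ≤ 1) {κ : Type*} (A : κ → Finset ι)
    (hA : Pairwise (Disjoint on A)) :
    iIndepSet (fun i => {ω | ∀ x ∈ A i, ω x = true}) (Measure.pi fun _ : ι => bern q) := by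
  classical
  rw [iIndepSet_iff_meas_biInter fun i => (Set.toFinite _).measurableSet]
  intro S
  have hinter : ⋂ i ∈ S, {ω : ι → Bool | ∀ x ∈ A i, ω x = true} =
      {ω | ∀ x ∈ S.biUnion A, ω x = true} := by
    ext ω; simp only [Set.mem_iInter, mem_biUnion]; grind
  rw [hinter, measure_pi_bern_forall_true h0 h1, card_biUnion (hA.set_pairwise _),
    ← prod_pow_eq_pow_sum]
  exact prod_congr rfl fun i _ => (measure_pi_bern_forall_true h0 h1 (A i)).symm

end Bernoulli

lemma ProbabilityTheory.iIndepSet.measure_iUnion_eq_one_sub_prod {Ω κ : Type*}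
    [MeasurableSpace Ω] [Fintype κ] {μ : Measure Ω} [IsProbabilityMeasure μ] {E : κ → Set Ω}
    (h : iIndepSet E μ) (hE : ∀ i, MeasurableSet (E i)) : μ (⋃ i, E i) = 1 - ∏ i, (1 - μ (E i)) := by
  have hcompl : μ (⋂ i, (E i)ᶜ) = ∏ i, μ (E i)ᶜ := by
    simpa using (iIndepSet_iff E μ).1 h univ (f := fun i => (E i)ᶜ)
      fun i _ => (MeasurableSpace.measurableSet_generateFrom (Set.mem_singleton _)).compl
  rw [← ENNReal.sub_sub_cancel ENNReal.one_ne_top prob_le_one,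
    ← prob_compl_eq_one_sub (MeasurableSet.iUnion hE), Set.compl_iUnion, hcompl]
  simp_rw [prob_compl_eq_one_sub (hE _)]

lemma measure_pi_bern_exists_forall_true {q : ℝ} (h0 : 0 ≤ q) (h1 : q ≤ 1)
    {ι κ : Type*} [Fintype ι] [Fintype κ] (A : κ → Finset ι) (hA : Pairwise (Disjoint on A))
    {m : ℕ} (hcard : ∀ i, #(A i) = m) :
    Measure.pi (fun _ : ι => bern q) {ω | ∃ i, ∀ x ∈ A i, ω x = true} =
      ENNReal.ofReal (1 - (1 - q ^ m) ^ Fintype.card κ) := by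
  have := isProbabilityMeasure_bern h0 h1
  have hqm : q ^ m ≤ 1 := pow_le_one₀ h0 h1
  rw [Set.ofPred_exists, (iIndepSet_pi_bern_forall_true h0 h1 A hA).measure_iUnion_eq_one_sub_prod
    fun i => (Set.toFinite _).measurableSet]
  simp only [measure_pi_bern_forall_true h0 h1, hcard, prod_const, card_univ]
  rw [← ENNReal.ofReal_pow h0, ← ENNReal.ofReal_one, ← ENNReal.ofReal_sub _ (by positivity),
    ← ENNReal.ofReal_pow (sub_nonneg.2 hqm), ← ENNReal.ofReal_sub _ (by bound)]

lemma one_sub_pow_le_rpow_neg {x n s' : ℝ} {s : ℕ} (hx : x ≤ 1) (hn : 0 < n)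
    (h : s' * log n ≤ s * x) : (1 - x) ^ s ≤ n ^ (-s') :=
  calc (1 - x) ^ s ≤ exp (-x) ^ s := pow_le_pow_left₀ (sub_nonneg.2 hx) (one_sub_le_exp_neg x) s
    _ = exp (-(s * x)) := by rw [← exp_nat_mul]; ring_nf
    _ ≤ exp (log n * -s') := exp_le_exp.2 (by linarith)
    _ = n ^ (-s') := (rpow_def_of_pos hn _).symm

lemma eventually_mul_log_le_rpow (c : ℝ) {ε : ℝ} (hε : 0 < ε) :
    ∀ᶠ n : ℕ in atTop, c * log n ≤ (n : ℝ) ^ ε := by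
  have hbound := ((isLittleO_log_rpow_atTop hε).const_mul_left c).bound one_pos
  filter_upwards [tendsto_natCast_atTop_atTop.eventually hbound] with n hn
  rw [one_mul, norm_of_nonneg (rpow_nonneg n.cast_nonneg ε)] at hn
  exact (le_norm_self _).trans hn

section Sparse

variable {p q N L : ℝ}

lemma one_le_log_div_of_sparse (hpqN : 0 < p * q * N) (hsparse : p * q * N ≤ 1 / 30 * L) :
    1 ≤ log (L / (p * q * N)) := by
  have hγ : 30 ≤ L / (p * q * N) := by rw [le_div_iff₀ hpqN]; linarith
  rw [le_log_iff_exp_le (by linarith)]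
  linarith [exp_one_lt_d9]

lemma log_inv_le_log_div_of_sparse (hp : 0 < p) (hq : 0 < q) (hN : 0 < N)
    (hsparse : p * q * N ≤ 1 / 30 * L) (hcase : p * N < L / (5 * log (L / (p * q * N)))) :
    log q⁻¹ ≤ log (L / (p * q * N)) := by
  have hpqN : 0 < p * q * N := by positivity
  have hlogγ := one_le_log_div_of_sparse hpqN hsparse
  have hpN : p * N ≤ L := hcase.le.trans (div_le_self (by linarith) (by linarith))
  refine log_le_log (inv_pos.2 hq) ?_
  rw [le_div_iff₀ hpqN]
  calc q⁻¹ * (p * q * N) = p * N := by field_simp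
    _ ≤ L := hpN

lemma mul_log_inv_le_of_sparse {c : ℝ} {m : ℕ} (hp : 0 < p) (hq0 : 0 < q) (hq1 : q ≤ 1)
    (hN : 0 < N) (hsparse : p * q * N ≤ 1 / 30 * L)
    (hcase : p * N < L / (5 * log (L / (p * q * N)))) (hc : 0 ≤ c) (hm : (m : ℝ) ≤ c * (N * p)) :
    m * log q⁻¹ ≤ c / 5 * L := by
  have hlogγ := one_le_log_div_of_sparse (by positivity) hsparse
  have hlogq := log_inv_le_log_div_of_sparse hp hq0 hN hsparse hcase
  set γ := L / (p * q * N)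
  have hlogq0 : 0 ≤ log q⁻¹ := log_nonneg (one_le_inv_iff₀.2 ⟨hq0, hq1⟩)
  calc m * log q⁻¹ ≤ c * (p * N) * log γ := by
        rw [mul_comm N p] at hm; exact mul_le_mul hm hlogq hlogq0 (by positivity)
    _ ≤ c * (L / (5 * log γ)) * log γ := by gcongr
    _ = c / 5 * L := by field_simp

lemma one_sub_pow_pow_le_rpow_neg_of_sparse {n s' : ℝ} {m s : ℕ} (hn : 0 < n) (hp : 0 < p)
    (hq0 : 0 < q) (hq1 : q ≤ 1) (hN : 0 < N) (hsparse : p * q * N ≤ 1 / 30 * log n)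
    (hcase : p * N < log n / (5 * log (log n / (p * q * N)))) (hm : (m : ℝ) ≤ 3 / 2 * (N * p))
    (hs : n ^ ((1 : ℝ) / 3) ≤ s) (hlog : s' * log n ≤ n ^ ((1 : ℝ) / 30)) :
    (1 - q ^ m) ^ s ≤ n ^ (-s') := by
  have hqm : n ^ (-(3 : ℝ) / 10) ≤ q ^ m := by
    have hlogq := mul_log_inv_le_of_sparse hp hq0 hq1 hN hsparse hcase (by norm_num) hm
    rw [log_inv] at hlogq
    rw [rpow_def_of_pos hn, ← exp_log (pow_pos hq0 m), log_pow, exp_le_exp]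
    linarith
  refine one_sub_pow_le_rpow_neg (pow_le_one₀ hq0.le hq1) hn ?_
  calc s' * log n ≤ n ^ ((1 : ℝ) / 30) := hlog
    _ = n ^ ((1 : ℝ) / 3) * n ^ (-(3 : ℝ) / 10) := by rw [← rpow_add hn]; norm_num
    _ ≤ s * q ^ m := by gcongr

end Sparse

theorem stmt7_general (k : ℕ) (p q : ℕ → ℝ)
    (hp : ∀ n, 0 < p n) (hpq : ∀ n, p n ≤ q n) (hq : ∀ n, q n ≤ 1 / 2)
    (hpN : Tendsto (fun n => (Nk k n : ℝ) * p n) atTop atTop)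
    (hsparse : ∀ᶠ n : ℕ in atTop, p n * q n * (Nk k n : ℝ) ≤ (1 / 30) * Real.log n)
    (hcase : ∀ᶠ n : ℕ in atTop,
      p n * (Nk k n : ℝ) <
        Real.log n / (5 * Real.log (Real.log n / (p n * q n * (Nk k n : ℝ)))))
    (M s : ℕ → ℕ) (hs : ∀ n : ℕ, ((n : ℝ)) ^ ((1 : ℝ) / 3) ≤ (s n : ℝ))
    (Ni : (n : ℕ) → Fin (s n) → Finset (Fin (M n)))
    (hdisj : ∀ n, ∀ i j : Fin (s n), i ≠ j → Disjoint (Ni n i) (Ni n j))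
    (m : ℕ → ℕ) (hcard : ∀ n, ∀ i : Fin (s n), (Ni n i).card = m n)
    (hm : Tendsto (fun n => (m n : ℝ) / ((Nk k n : ℝ) * p n)) atTop (nhds 1)) :
    ∀ s' : ℝ, 0 < s' →
      ∀ᶠ n : ℕ in atTop,
        ENNReal.ofReal (1 - (n : ℝ) ^ (-s')) ≤
          (Measure.pi fun _ : Fin (M n) => bern (q n))
            {ω | ∃ i : Fin (s n), ∀ x ∈ Ni n i, ω x = true} := by
  intro s' _
  filter_upwards [hsparse, hcase, hpN.eventually_ge_atTop 1,
    hm.eventually_lt_const (by norm_num : (1 : ℝ) < 3 / 2),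
    eventually_mul_log_le_rpow s' (by norm_num : (0 : ℝ) < 1 / 30), eventually_gt_atTop 0]
    with n hsparse_n hcase_n hNp hm_n hlog hn
  have hq0 : 0 < q n := (hp n).trans_le (hpq n)
  have hq1 : q n ≤ 1 := (hq n).trans (by norm_num)
  have hN : 0 < (Nk k n : ℝ) := pos_of_mul_pos_left (one_pos.trans_le hNp) (hp n).le
  have hm_le : (m n : ℝ) ≤ 3 / 2 * (Nk k n * p n) :=
    ((div_lt_iff₀ (one_pos.trans_le hNp)).1 hm_n).le
  rw [measure_pi_bern_exists_forall_true hq0.le hq1 (Ni n) (hdisj n) (hcard n), Fintype.card_fin]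
  refine ENNReal.ofReal_le_ofReal (sub_le_sub_left ?_ 1)
  exact one_sub_pow_pow_le_rpow_neg_of_sparse (Nat.cast_pos.2 hn) (hp n) hq0 hq1 hN hsparse_n
    hcase_n hm_le (hs n) hlog

/-- STATEMENT 6: the sparse intersection lemma, case (2).
The ground set `B` is modelled as `Fin (M n)` and `B_q` as the random subset
given by the product Bernoulli measure with parameter `q n`. -/
theorem stmt7 (k : ℕ) (hk : 2 ≤ k) (p q : ℕ → ℝ)
    (hp : ∀ n, 0 < p n) (hpq : ∀ n, p n ≤ q n) (hq : ∀ n, q n ≤ 1 / 2)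
    (hpN : Tendsto (fun n => (Nk k n : ℝ) * p n) atTop atTop)
    (hsparse : ∀ᶠ n : ℕ in atTop, p n * q n * (Nk k n : ℝ) ≤ (1 / 30) * Real.log n)
    (hcase : ∀ᶠ n : ℕ in atTop,
      p n * (Nk k n : ℝ) <
        Real.log n / (5 * Real.log (Real.log n / (p n * q n * (Nk k n : ℝ)))))
    (M s : ℕ → ℕ) (hs : ∀ n : ℕ, ((n : ℝ)) ^ ((1 : ℝ) / 3) ≤ (s n : ℝ))
    (Ni : (n : ℕ) → Fin (s n) → Finset (Fin (M n)))
    (hdisj : ∀ n, ∀ i j : Fin (s n), i ≠ j → Disjoint (Ni n i) (Ni n j))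
    (m : ℕ → ℕ) (hcard : ∀ n, ∀ i : Fin (s n), (Ni n i).card = m n)
    (hm : Tendsto (fun n => (m n : ℝ) / ((Nk k n : ℝ) * p n)) atTop (nhds 1)) :
    ∀ s' : ℝ, 0 < s' →
      ∀ᶠ n : ℕ in atTop,
        ENNReal.ofReal (1 - (n : ℝ) ^ (-s')) ≤
          (Measure.pi fun _ : Fin (M n) => bern (q n))
            {ω | ∃ i : Fin (s n), ∀ x ∈ Ni n i, ω x = true} :=
  stmt7_general k p q hp hpq hq hpN hsparse hcase M s hs Ni hdisj m hcard hm
end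

section
/- Fix integers n ≥ k ≥ 2 and reals 0 < p ≤ q ≤ 1/2 with p·C(n,k) ≥ 4√n. Let G ~ H^{(k)}(n,p) and H ~ H^{(k)}(n,q) be independent, and set ε = 4·n^{1/4}·√(p q·C(n,k)). Then with probability at least 1 − 4e^{−√n}, one has |disc(G,H) − discP(G,H)| ≤ 2ε. -/
open MeasureTheory Finset Filter

/-- Product Bernoulli measure on subsets of `Finset (Fin n)` (indicator functions),
modelling the random hypergraph `H^{(k)}(n, p)`. -/
noncomputable def hypMeasure (n : ℕ) (p : ℝ) : Measure (Finset (Fin n) → Bool) :=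
  Measure.pi fun _ => bern p

/-- The edge set of the `k`-uniform hypergraph determined by the outcome `ω`. -/
def edgesOf (n k : ℕ) (ω : Finset (Fin n) → Bool) : Finset (Finset (Fin n)) :=
  Finset.univ.filter fun s => s.card = k ∧ ω s = true

/-- `e(G_π ∩ H)`, the number of common edges of `G` permuted by `π` and `H`. -/
def overlap (n : ℕ) (G H : Finset (Finset (Fin n))) (π : Equiv.Perm (Fin n)) : ℕ :=
  ((G.image fun e => e.image π) ∩ H).card

/-- The relative discrepancy `disc(G, H)`. -/
noncomputable def disc (n k : ℕ) (G H : Finset (Finset (Fin n))) : ℝ :=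
  Finset.univ.sup' Finset.univ_nonempty fun π : Equiv.Perm (Fin n) =>
    |(overlap n G H π : ℝ) -
      ((G.card : ℝ) / (n.choose k)) * ((H.card : ℝ) / (n.choose k)) * (n.choose k)|

/-- The probabilistic discrepancy `discP(G, H)`. -/
noncomputable def discP (n k : ℕ) (p q : ℝ) (G H : Finset (Finset (Fin n))) : ℝ :=
  Finset.univ.sup' Finset.univ_nonempty fun π : Equiv.Perm (Fin n) =>
    |(overlap n G H π : ℝ) - p * q * (n.choose k)|

/-!
The edge counts `e(G)` and `e(H)` are sums of independent Bernoulli variables, so their mgf is at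
most that of a Poisson variable, `exp (λ (e^t - 1)) ≤ exp (λ t + λ t²)` for `|t| ≤ 1`. A Chernoff
bound then keeps `e(G)` within `2 n^{1/4} √(p C(n,k))` of its mean `p C(n,k)`, and likewise `e(H)`,
except with probability `2 e^{-√n}` each. The two discrepancies are suprema over `π` of functions
that differ pointwise by at most `|ρ_G ρ_H C(n,k) - p q C(n,k)|`, and on the good event expanding
`e(G) e(H) - (p C(n,k)) (q C(n,k))` around the means bounds this by `6 n^{1/4} √(p q C(n,k))`.
-/

open ProbabilityTheory Real

section Sup

variable {ι α : Type*} [AddCommGroup α] [LinearOrder α] [IsOrderedAddMonoid α] {s : Finset ι}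
  {f g : ι → α} {d : α}

lemma Finset.sup'_le_sup'_add (hs : s.Nonempty) (h : ∀ i ∈ s, f i ≤ g i + d) : s.sup' hs f ≤ s.sup' hs g + d :=
  Finset.sup'_le hs f fun i hi => (h i hi).trans (by gcongr; exact Finset.le_sup' g hi)

lemma Finset.abs_sup'_sub_sup'_le (hs : s.Nonempty) (h : ∀ i ∈ s, |f i - g i| ≤ d) :
    |s.sup' hs f - s.sup' hs g| ≤ d := by
  rw [abs_sub_le_iff, sub_le_iff_le_add', sub_le_iff_le_add']
  constructor <;> refine Finset.sup'_le_sup'_add hs fun i hi => ?_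
  · exact add_comm d (g i) ▸ sub_le_iff_le_add.1 (abs_sub_le_iff.1 (h i hi)).1
  · exact add_comm d (f i) ▸ sub_le_iff_le_add.1 (abs_sub_le_iff.1 (h i hi)).2

end Sup

lemma abs_disc_sub_discP_le (n k : ℕ) (p q : ℝ) (G H : Finset (Finset (Fin n))) :
    |disc n k G H - discP n k p q G H| ≤
      |(G.card : ℝ) / n.choose k * ((H.card : ℝ) / n.choose k) * n.choose k
        - p * q * n.choose k| :=
  Finset.abs_sup'_sub_sup'_le _ fun σ _ => by
    refine (abs_abs_sub_abs_le_abs_sub _ _).trans_eq ?_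
    rw [sub_sub_sub_cancel_left, abs_sub_comm]

lemma abs_mul_div_sq_sub_le {x y a b δ s : ℝ} (ha : 0 ≤ a) (hb : 0 ≤ b) (hδ : 0 ≤ δ) (hs : 0 < s)
    (has : a ≤ s) (hbs : b ≤ s) (hδs : δ ≤ s) (hx : |x - a ^ 2| ≤ δ * a)
    (hy : |y - b ^ 2| ≤ δ * b) :
    |x * y / s ^ 2 - a ^ 2 * b ^ 2 / s ^ 2| ≤ 3 * δ * (a * b / s) := by
  have key : |x * y - a ^ 2 * b ^ 2| ≤ 3 * δ * (a * b) * s := calc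
    |x * y - a ^ 2 * b ^ 2|
        = |(x - a ^ 2) * (y - b ^ 2) + (x - a ^ 2) * b ^ 2 + a ^ 2 * (y - b ^ 2)| := by ring_nf
    _ ≤ δ * a * (δ * b) + δ * a * b ^ 2 + a ^ 2 * (δ * b) := by
      refine (abs_add_three _ _ _).trans ?_
      simp only [abs_mul, abs_sq]
      gcongr
    _ = δ * (a * b) * (δ + b + a) := by ring
    _ ≤ 3 * δ * (a * b) * s := by nlinarith [mul_nonneg hδ (mul_nonneg ha hb)]
  rw [← sub_div, abs_div, abs_of_pos (pow_pos hs 2), div_le_iff₀ (pow_pos hs 2)]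
  calc _ ≤ 3 * δ * (a * b) * s := key
    _ = 3 * δ * (a * b / s) * s ^ 2 := by field_simp

section Chernoff

variable {Ω : Type*} [MeasurableSpace Ω] {μ : Measure Ω} [IsFiniteMeasure μ] {X : Ω → ℝ}
  {c v u : ℝ}

lemma measureReal_add_le_le_of_mgf_le
    (hmgf : ∀ t, |t| ≤ 1 → mgf X μ t ≤ exp (c * t + v * t ^ 2))
    (hint : ∀ t, Integrable (fun ω => exp (t * X ω)) μ) (hv : 0 < v) (hu : 0 ≤ u)
    (huv : u ≤ 2 * v) :
    μ.real {ω | c + u ≤ X ω} ≤ exp (-(u ^ 2 / (4 * v))) := by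
  set t := u / (2 * v) with ht
  have ht0 : 0 ≤ t := by positivity
  have ht1 : |t| ≤ 1 := by rw [abs_of_nonneg ht0, div_le_one (by positivity)]; exact huv
  calc μ.real {ω | c + u ≤ X ω} ≤ exp (-t * (c + u)) * mgf X μ t :=
        measure_ge_le_exp_mul_mgf _ ht0 (hint t)
    _ ≤ exp (-t * (c + u)) * exp (c * t + v * t ^ 2) := by gcongr; exact hmgf t ht1
    _ = exp (-(u ^ 2 / (4 * v))) := by
        rw [← exp_add, ht]; congr 1; field_simp; ring

lemma measureReal_le_sub_le_of_mgf_le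
    (hmgf : ∀ t, |t| ≤ 1 → mgf X μ t ≤ exp (c * t + v * t ^ 2))
    (hint : ∀ t, Integrable (fun ω => exp (t * X ω)) μ) (hv : 0 < v) (hu : 0 ≤ u)
    (huv : u ≤ 2 * v) :
    μ.real {ω | X ω ≤ c - u} ≤ exp (-(u ^ 2 / (4 * v))) := by
  have hmgf_neg (t : ℝ) (ht : |t| ≤ 1) : mgf (-X) μ t ≤ exp (-c * t + v * t ^ 2) := by
    rw [mgf_neg]
    convert hmgf (-t) (by rwa [abs_neg]) using 2
    ring
  have hint_neg (t : ℝ) : Integrable (fun ω => exp (t * (-X) ω)) μ := by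
    simpa only [Pi.neg_apply, mul_neg, neg_mul] using hint (-t)
  convert measureReal_add_le_le_of_mgf_le hmgf_neg hint_neg hv hu huv using 3
  ext ω
  simp only [Pi.neg_apply]
  constructor <;> intro h <;> linarith

lemma measure_lt_abs_sub_le_of_mgf_le
    (hmgf : ∀ t, |t| ≤ 1 → mgf X μ t ≤ exp (c * t + v * t ^ 2))
    (hint : ∀ t, Integrable (fun ω => exp (t * X ω)) μ) (hv : 0 < v) (hu : 0 ≤ u)
    (huv : u ≤ 2 * v) :
    μ {ω | u < |X ω - c|} ≤ ENNReal.ofReal (2 * exp (-(u ^ 2 / (4 * v)))) := by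
  have hsplit : {ω | u < |X ω - c|} ⊆ {ω | c + u ≤ X ω} ∪ {ω | X ω ≤ c - u} := by
    intro ω (hω : u < |X ω - c|)
    rcases lt_abs.1 hω with h | h
    · exact Or.inl (show c + u ≤ X ω by linarith)
    · exact Or.inr (show X ω ≤ c - u by linarith)
  rw [← ENNReal.ofReal_toReal (measure_ne_top μ _)]
  refine ENNReal.ofReal_le_ofReal ?_
  calc μ.real {ω | u < |X ω - c|}
      ≤ μ.real {ω | c + u ≤ X ω} + μ.real {ω | X ω ≤ c - u} :=
        (measureReal_mono hsplit).trans (measureReal_union_le _ _)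
    _ ≤ 2 * exp (-(u ^ 2 / (4 * v))) := by
        linarith [measureReal_add_le_le_of_mgf_le hmgf hint hv hu huv,
          measureReal_le_sub_le_of_mgf_le hmgf hint hv hu huv]

end Chernoff

section RandomHypergraph

variable {n k : ℕ} {p : ℝ}

lemma isProbabilityMeasure_bern_s10 (hp : 0 ≤ p) (hp1 : p ≤ 1) : IsProbabilityMeasure (bern p) :=
  ⟨by simp [bern, ← ENNReal.ofReal_add hp (sub_nonneg.2 hp1)]⟩

lemma isProbabilityMeasure_hypMeasure (hp : 0 ≤ p) (hp1 : p ≤ 1) :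
    IsProbabilityMeasure (hypMeasure n p) :=
  have := isProbabilityMeasure_bern_s10 hp hp1
  inferInstanceAs (IsProbabilityMeasure (Measure.pi _))

lemma integral_bern (hp : 0 ≤ p) (hp1 : p ≤ 1) (f : Bool → ℝ) :
    ∫ b, f b ∂bern p = p * f true + (1 - p) * f false := by
  have := isProbabilityMeasure_bern_s10 hp hp1
  rw [integral_fintype .of_finite]
  simp [Measure.real, bern, ENNReal.toReal_ofReal hp, ENNReal.toReal_ofReal (sub_nonneg.2 hp1)]

lemma card_filter_card_eq (n k : ℕ) :
    #{s : Finset (Fin n) | s.card = k} = n.choose k := by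
  rw [← powerset_univ, ← powersetCard_eq_filter, card_powersetCard, card_univ, Fintype.card_fin]

lemma exp_mul_card_edgesOf (t : ℝ) (ω : Finset (Fin n) → Bool) :
    exp (t * #(edgesOf n k ω)) = ∏ s, if s.card = k ∧ ω s = true then exp t else 1 := by
  rw [edgesOf, card_filter, Nat.cast_sum, mul_sum, exp_sum]
  refine prod_congr rfl fun s _ => ?_
  split_ifs <;> simp

lemma mgf_card_edgesOf (hp : 0 ≤ p) (hp1 : p ≤ 1) (t : ℝ) :
    mgf (fun ω => (#(edgesOf n k ω) : ℝ)) (hypMeasure n p) t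
      = (1 + p * (exp t - 1)) ^ n.choose k := by
  have := isProbabilityMeasure_bern_s10 hp hp1
  calc mgf (fun ω => (#(edgesOf n k ω) : ℝ)) (hypMeasure n p) t
      = ∏ s : Finset (Fin n), ∫ b, (if s.card = k ∧ b = true then exp t else 1) ∂bern p := by
        simp only [mgf, exp_mul_card_edgesOf]
        exact integral_fintype_prod_eq_prod
          (fun (s : Finset (Fin n)) (b : Bool) => if s.card = k ∧ b = true then exp t else 1)
    _ = ∏ s : Finset (Fin n), if s.card = k then 1 + p * (exp t - 1) else 1 := by
        refine prod_congr rfl fun s _ => ?_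
        rw [integral_bern hp hp1]
        split_ifs <;> simp_all; ring
    _ = (1 + p * (exp t - 1)) ^ n.choose k := by
        rw [prod_ite, prod_const, prod_const_one, mul_one, card_filter_card_eq]

lemma mgf_card_edgesOf_le (hp : 0 ≤ p) (hp1 : p ≤ 1) {t : ℝ} (ht : |t| ≤ 1) :
    mgf (fun ω => (#(edgesOf n k ω) : ℝ)) (hypMeasure n p) t
      ≤ exp (p * n.choose k * t + p * n.choose k * t ^ 2) := by
  have hexp : exp t - 1 ≤ t + t ^ 2 := by linarith [(abs_le.1 (abs_exp_sub_one_sub_id_le ht)).2]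
  have hbase : 0 ≤ 1 + p * (exp t - 1) := by nlinarith [exp_pos t]
  calc mgf (fun ω => (#(edgesOf n k ω) : ℝ)) (hypMeasure n p) t
      = (1 + p * (exp t - 1)) ^ n.choose k := mgf_card_edgesOf hp hp1 t
    _ ≤ exp (p * (exp t - 1)) ^ n.choose k := by
        gcongr; linarith [add_one_le_exp (p * (exp t - 1))]
    _ = exp (p * n.choose k * (exp t - 1)) := by rw [← exp_nat_mul]; ring_nf
    _ ≤ exp (p * n.choose k * t + p * n.choose k * t ^ 2) := by
        gcongr; nlinarith [mul_nonneg hp (Nat.cast_nonneg (α := ℝ) (n.choose k))]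

lemma hypMeasure_lt_abs_card_edgesOf_sub_le (hp : 0 ≤ p) (hp1 : p ≤ 1)
    (hpC : 0 < p * n.choose k) {u : ℝ} (hu : 0 ≤ u) (huC : u ≤ 2 * (p * n.choose k)) :
    hypMeasure n p {ω | u < |(#(edgesOf n k ω) : ℝ) - p * n.choose k|}
      ≤ ENNReal.ofReal (2 * exp (-(u ^ 2 / (4 * (p * n.choose k))))) :=
  have := isProbabilityMeasure_hypMeasure (n := n) hp hp1
  measure_lt_abs_sub_le_of_mgf_le (fun _ ht => mgf_card_edgesOf_le hp hp1 ht)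
    (fun _ => .of_finite) hpC hu huC

end RandomHypergraph

lemma rpow_one_div_four_sq {x : ℝ} (hx : 0 ≤ x) : (x ^ ((1 : ℝ) / 4)) ^ 2 = √x := by
  rw [← rpow_natCast, ← rpow_mul hx, sqrt_eq_rpow]
  norm_num

lemma hypMeasure_compl_card_edgesOf_near_le {n k : ℕ} (hkn : k ≤ n) {p : ℝ} (hp : 0 < p)
    (hp1 : p ≤ 1) (hpC : √n ≤ p * n.choose k) :
    hypMeasure n p {ω | |(#(edgesOf n k ω) : ℝ) - p * n.choose k|
        ≤ 2 * (n : ℝ) ^ ((1 : ℝ) / 4) * √(p * n.choose k)}ᶜ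
      ≤ ENNReal.ofReal (2 * exp (-√n)) := by
  set L := p * n.choose k
  set m := (n : ℝ) ^ ((1 : ℝ) / 4)
  have hL : 0 < L := mul_pos hp (by exact_mod_cast Nat.choose_pos hkn)
  have hm2 : m ^ 2 = √n := rpow_one_div_four_sq (Nat.cast_nonneg n)
  have hm : m ≤ √L := le_sqrt_of_sq_le (hm2 ▸ hpC)
  have hL_sqrt : √L ^ 2 = L := sq_sqrt hL.le
  have hu : 2 * m * √L ≤ 2 * L := by nlinarith [sqrt_nonneg L]
  convert hypMeasure_lt_abs_card_edgesOf_sub_le hp.le hp1 hL (by positivity) hu using 3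
  · ext ω
    exact (not_le (α := ℝ)).trans Iff.rfl
  · change _ = exp (-((2 * m * √L) ^ 2 / (4 * L)))
    rw [mul_pow, mul_pow, hm2, hL_sqrt]
    field_simp
    norm_num

lemma abs_disc_sub_discP_le_of_card_near {n k : ℕ} {p q δ : ℝ} (hp : 0 ≤ p) (hp1 : p ≤ 1)
    (hq : 0 ≤ q) (hq1 : q ≤ 1) (hC : 0 < (n.choose k : ℝ)) (hδ : 0 ≤ δ)
    (hδC : δ ^ 2 ≤ n.choose k) {G H : Finset (Finset (Fin n))}
    (hG : |(#G : ℝ) - p * n.choose k| ≤ δ * √(p * n.choose k))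
    (hH : |(#H : ℝ) - q * n.choose k| ≤ δ * √(q * n.choose k)) :
    |disc n k G H - discP n k p q G H| ≤ 3 * δ * √(p * q * n.choose k) := by
  set C : ℝ := (n.choose k : ℝ)
  have hpC : p * C ≤ C := mul_le_of_le_one_left hC.le hp1
  have hqC : q * C ≤ C := mul_le_of_le_one_left hC.le hq1
  have hmean : (#G : ℝ) / C * (#H / C) * C - p * q * C
      = #G * #H / √C ^ 2 - √(p * C) ^ 2 * √(q * C) ^ 2 / √C ^ 2 := by
    rw [sq_sqrt hC.le, sq_sqrt (by positivity), sq_sqrt (by positivity)]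
    field_simp
  have hscale : √(p * q * C) = √(p * C) * √(q * C) / √C := by
    rw [← sqrt_mul (by positivity), ← sqrt_div (by positivity)]
    congr 1
    field_simp
  refine (abs_disc_sub_discP_le n k p q G H).trans ?_
  rw [hmean, hscale]
  refine abs_mul_div_sq_sub_le (sqrt_nonneg _) (sqrt_nonneg _) hδ (sqrt_pos.2 hC)
    (sqrt_le_sqrt hpC) (sqrt_le_sqrt hqC) (le_sqrt_of_sq_le hδC) ?_ ?_
  · rwa [sq_sqrt (by positivity)]
  · rwa [sq_sqrt (by positivity)]

lemma one_sub_add_le_prod_prod {α β : Type*} [MeasurableSpace α] [MeasurableSpace β]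
    {μ : Measure α} {ν : Measure β} [IsProbabilityMeasure μ] [IsProbabilityMeasure ν]
    {A : Set α} {B : Set β} (hA : MeasurableSet A) (hB : MeasurableSet B) :
    1 - (μ Aᶜ + ν Bᶜ) ≤ μ.prod ν (A ×ˢ B) := by
  rw [tsub_le_iff_left]
  calc 1 = μ.prod ν (A ×ˢ B) + μ.prod ν (A ×ˢ B)ᶜ := (prob_add_prob_compl (hA.prod hB)).symm
    _ ≤ μ.prod ν (A ×ˢ B) + (μ Aᶜ + ν Bᶜ) := by
      gcongr
      rw [Set.compl_prod_eq_union]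
      refine (measure_union_le _ _).trans_eq ?_
      rw [Measure.prod_prod, Measure.prod_prod, measure_univ, measure_univ, mul_one, one_mul]
    _ = μ Aᶜ + ν Bᶜ + μ.prod ν (A ×ˢ B) := add_comm _ _

theorem stmt10_general (n k : ℕ) (hkn : k ≤ n) (p q : ℝ)
    (hp : 0 < p) (hpq : p ≤ q) (hq : q ≤ 1 / 2)
    (hpC : 4 * Real.sqrt n ≤ p * (n.choose k)) :
    ENNReal.ofReal (1 - 4 * Real.exp (-Real.sqrt n)) ≤
      ((hypMeasure n p).prod (hypMeasure n q))
        {ω | |disc n k (edgesOf n k ω.1) (edgesOf n k ω.2) -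
               discP n k p q (edgesOf n k ω.1) (edgesOf n k ω.2)| ≤
             2 * (4 * (n : ℝ) ^ ((1 : ℝ) / 4) * Real.sqrt (p * q * (n.choose k)))} := by
  set C : ℝ := (n.choose k : ℝ)
  set m := (n : ℝ) ^ ((1 : ℝ) / 4)
  have hq0 : 0 < q := hp.trans_le hpq
  have hC : 0 < C := Nat.cast_pos.2 (Nat.choose_pos hkn)
  have hsqrt : 0 ≤ √(n : ℝ) := sqrt_nonneg _
  have hqC : 4 * √n ≤ q * C := hpC.trans (by gcongr)
  have hmC : (2 * m) ^ 2 ≤ C := by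
    rw [mul_pow, rpow_one_div_four_sq (Nat.cast_nonneg n)]
    nlinarith [mul_le_of_le_one_left hC.le (show p ≤ 1 by linarith)]
  have := isProbabilityMeasure_hypMeasure (n := n) hp.le (by linarith)
  have := isProbabilityMeasure_hypMeasure (n := n) hq0.le (by linarith)
  calc ENNReal.ofReal (1 - 4 * exp (-√n))
      = 1 - (ENNReal.ofReal (2 * exp (-√n)) + ENNReal.ofReal (2 * exp (-√n))) := by
        rw [← ENNReal.ofReal_add (by positivity) (by positivity),
          ← ENNReal.ofReal_one, ← ENNReal.ofReal_sub _ (by positivity)]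
        ring_nf
    _ ≤ 1 - (hypMeasure n p {ω | |(#(edgesOf n k ω) : ℝ) - p * C| ≤ 2 * m * √(p * C)}ᶜ
          + hypMeasure n q {ω | |(#(edgesOf n k ω) : ℝ) - q * C| ≤ 2 * m * √(q * C)}ᶜ) := by
        gcongr
        · exact hypMeasure_compl_card_edgesOf_near_le hkn hp (by linarith) (by linarith)
        · exact hypMeasure_compl_card_edgesOf_near_le hkn hq0 (by linarith) (by linarith)
    _ ≤ _ := one_sub_add_le_prod_prod .of_discrete .of_discrete
    _ ≤ _ := measure_mono fun ω ⟨hG, hH⟩ => by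
        refine (abs_disc_sub_discP_le_of_card_near hp.le (by linarith) hq0.le (by linarith) hC
          (by positivity) hmC hG hH).trans ?_
        nlinarith [show 0 ≤ m * √(p * q * C) by positivity]

/-- w.h.p. the discrepancy and the probabilistic discrepancy
differ by at most `2 * ε` where `ε = 4 * n^(1/4) * sqrt (p*q*C(n,k))`. -/
theorem stmt10 (n k : ℕ) (hk : 2 ≤ k) (hkn : k ≤ n) (p q : ℝ)
    (hp : 0 < p) (hpq : p ≤ q) (hq : q ≤ 1 / 2)
    (hpC : 4 * Real.sqrt n ≤ p * (n.choose k)) :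
    ENNReal.ofReal (1 - 4 * Real.exp (-Real.sqrt n)) ≤
      ((hypMeasure n p).prod (hypMeasure n q))
        {ω | |disc n k (edgesOf n k ω.1) (edgesOf n k ω.2) -
               discP n k p q (edgesOf n k ω.1) (edgesOf n k ω.2)| ≤
             2 * (4 * (n : ℝ) ^ ((1 : ℝ) / 4) * Real.sqrt (p * q * (n.choose k)))} :=
  stmt10_general n k hkn p q hp hpq hq hpC
end

section
/- Fix integers n ≥ k ≥ 2 and reals 0 < p ≤ q ≤ 1 with p q·C(n,k) ≤ 4·n·log n. Set γ' = 4e·(n·log n)/(p q·C(n,k)) and λ = 4e²·(n·log n)/(log γ'). Let X be a binomial random variable with parameters C(n,k) and pq. Then P[X > λ] ≤ (γ'/log γ')^{−4e²·n·log n/log γ'} < e^{−n·log n}. -/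
/-! Chernoff's method: for every `s ≥ 0`, Markov's inequality applied to `e^{sX}` and the binomial
theorem give `P[X > λ] ≤ e^{-sλ} (1 - r + r e^s)^N ≤ e^{μ(e^s - 1) - sλ}` with `μ = N r`, and the
choice `e^s = λ/μ` yields `P[X > λ] ≤ (eμ/λ)^λ`. With `λ = eγ'μ/log γ'` this is the claimed
bound `(γ'/log γ')^{-λ}`, and since `log L ≤ L/e` for `L = log γ'`, the exponent
`λ (L - log L) ≥ 4e²(1 - 1/e) n log n` exceeds `n log n`. -/

open Real Finset

section BinomialTail

variable (N : ℕ) {r : ℝ}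

lemma binomial_upper_tail_le_exp_neg_mul_mul_pow (hr0 : 0 ≤ r) (hr1 : r ≤ 1) {s : ℝ}
    (hs : 0 ≤ s) (lam : ℝ) :
    ∑ t ∈ (range (N + 1)).filter (fun t : ℕ => lam < (t : ℝ)),
        (N.choose t : ℝ) * r ^ t * (1 - r) ^ (N - t) ≤
      exp (-(s * lam)) * (r * exp s + (1 - r)) ^ N := by
  have hterm : ∀ t, 0 ≤ (N.choose t : ℝ) * r ^ t * (1 - r) ^ (N - t) := fun t => by
    have : 0 ≤ 1 - r := by linarith
    positivity
  calc ∑ t ∈ (range (N + 1)).filter (fun t : ℕ => lam < (t : ℝ)),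
        (N.choose t : ℝ) * r ^ t * (1 - r) ^ (N - t)
      ≤ ∑ t ∈ (range (N + 1)).filter (fun t : ℕ => lam < (t : ℝ)),
          exp (s * (t - lam)) * ((N.choose t : ℝ) * r ^ t * (1 - r) ^ (N - t)) := by
        refine sum_le_sum fun t ht => le_mul_of_one_le_left (hterm t) (one_le_exp ?_)
        exact mul_nonneg hs (sub_nonneg.2 (mem_filter.1 ht).2.le)
    _ ≤ ∑ t ∈ range (N + 1),
          exp (s * (t - lam)) * ((N.choose t : ℝ) * r ^ t * (1 - r) ^ (N - t)) :=
        sum_le_sum_of_subset_of_nonneg (filter_subset _ _)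
          fun t _ _ => mul_nonneg (exp_pos _).le (hterm t)
    _ = exp (-(s * lam)) * (r * exp s + (1 - r)) ^ N := by
        rw [add_pow, mul_sum]
        refine sum_congr rfl fun t _ => ?_
        rw [show s * ((t : ℝ) - lam) = t * s + -(s * lam) by ring, exp_add, exp_nat_mul, mul_pow]
        ring

lemma binomial_upper_tail_le_exp (hr0 : 0 ≤ r) (hr1 : r ≤ 1) {s : ℝ} (hs : 0 ≤ s) (lam : ℝ) :
    ∑ t ∈ (range (N + 1)).filter (fun t : ℕ => lam < (t : ℝ)),
        (N.choose t : ℝ) * r ^ t * (1 - r) ^ (N - t) ≤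
      exp (N * r * (exp s - 1) - s * lam) := by
  have hbase : r * exp s + (1 - r) ≤ exp (r * (exp s - 1)) := by
    linarith [add_one_le_exp (r * (exp s - 1))]
  have hbase0 : 0 ≤ r * exp s + (1 - r) := by nlinarith [one_le_exp hs]
  calc _ ≤ exp (-(s * lam)) * (r * exp s + (1 - r)) ^ N :=
        binomial_upper_tail_le_exp_neg_mul_mul_pow N hr0 hr1 hs lam
    _ ≤ exp (-(s * lam)) * exp (r * (exp s - 1)) ^ N := by gcongr
    _ = exp (N * r * (exp s - 1) - s * lam) := by
        rw [← exp_nat_mul, ← exp_add]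
        ring_nf

lemma binomial_upper_tail_le_rpow (hN : 0 < N) (hr0 : 0 < r) (hr1 : r ≤ 1) {lam : ℝ}
    (hlam : N * r ≤ lam) :
    ∑ t ∈ (range (N + 1)).filter (fun t : ℕ => lam < (t : ℝ)),
        (N.choose t : ℝ) * r ^ t * (1 - r) ^ (N - t) ≤
      (exp 1 * (N * r) / lam) ^ lam := by
  have hμ : 0 < (N : ℝ) * r := by positivity
  have hlam0 : 0 < lam := hμ.trans_le hlam
  have hs : 0 ≤ log (lam / (N * r)) := log_nonneg ((one_le_div hμ).2 hlam)
  refine (binomial_upper_tail_le_exp N hr0.le hr1 hs lam).trans ?_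
  rw [exp_log (by positivity), rpow_def_of_pos (by positivity),
    log_div (by positivity) hlam0.ne', log_mul (exp_pos 1).ne' hμ.ne', log_exp,
    log_div hlam0.ne' hμ.ne', exp_le_exp, mul_sub, mul_div_cancel₀ _ hμ.ne']
  nlinarith

lemma binomial_upper_tail_le_div_log_rpow (hN : 0 < N) (hr0 : 0 < r) (hr1 : r ≤ 1) {γ : ℝ}
    (hγ : 1 < γ) :
    ∑ t ∈ (range (N + 1)).filter (fun t : ℕ => exp 1 * (γ / log γ) * (N * r) < (t : ℝ)),
        (N.choose t : ℝ) * r ^ t * (1 - r) ^ (N - t) ≤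
      (γ / log γ) ^ (-(exp 1 * (γ / log γ) * (N * r))) := by
  have hL : 0 < log γ := log_pos hγ
  have hγL : 1 ≤ γ / log γ := (one_le_div hL).2 (log_le_self (by linarith))
  have hμ : 0 < (N : ℝ) * r := by positivity
  refine (binomial_upper_tail_le_rpow N hN hr0 hr1 (le_mul_of_one_le_left hμ.le
    (one_le_mul_of_one_le_of_one_le (one_le_exp zero_le_one) hγL))).trans_eq ?_
  rw [rpow_neg (by positivity), ← inv_rpow (by positivity)]
  congr 1
  field_simp

end BinomialTail

lemma rpow_neg_lt_exp_neg {γ x : ℝ} (hγ : 1 < γ) (hx : 0 < x) :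
    (γ / log γ) ^ (-(4 * exp 2 * x / log γ)) < exp (-x) := by
  set L := log γ
  have hL : 0 < L := log_pos hγ
  have hlogL : exp 1 * log L ≤ L := by simpa [exp_log hL] using exp_one_mul_le_exp (x := log L)
  have he : 2.7 < exp 1 := by linarith [exp_one_gt_d9]
  have hexp2 : exp 2 = exp 1 * exp 1 := by rw [← exp_add]; norm_num
  have key : x < (L - log L) * (4 * exp 2 * x / L) := by
    rw [show (L - log L) * (4 * exp 2 * x / L) = 4 * exp 1 * x * (exp 1 * (L - log L)) / L by
      rw [hexp2]; ring, lt_div_iff₀ hL]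
    have he1 : 0 < 4 * exp 1 * (exp 1 - 1) - 1 := by nlinarith
    nlinarith [mul_le_mul_of_nonneg_left hlogL (by positivity : (0 : ℝ) ≤ 4 * exp 1 * x),
      mul_pos (mul_pos hx hL) he1]
  rw [rpow_def_of_pos (div_pos (by linarith) hL), log_div (by linarith) hL.ne', exp_lt_exp,
    mul_neg, neg_lt_neg_iff]
  exact key

theorem stmt13_general (n k : ℕ) (hkn : k ≤ n) (p q : ℝ)
    (hp : 0 < p) (hpq : p ≤ q) (hq : q ≤ 1)
    (hsparse : p * q * (n.choose k) ≤ 4 * (n : ℝ) * Real.log n)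
    (γ' lam : ℝ)
    (hγ' : γ' = 4 * Real.exp 1 * ((n : ℝ) * Real.log n) / (p * q * (n.choose k)))
    (hlam : lam = 4 * Real.exp 2 * ((n : ℝ) * Real.log n) / Real.log γ') :
    (∑ t ∈ (Finset.range (n.choose k + 1)).filter (fun t : ℕ => lam < (t : ℝ)),
        ((n.choose k).choose t : ℝ) * (p * q) ^ t * (1 - p * q) ^ (n.choose k - t)) ≤
      (γ' / Real.log γ') ^ (-(4 * Real.exp 2 * (n : ℝ) * Real.log n / Real.log γ')) ∧
    (γ' / Real.log γ') ^ (-(4 * Real.exp 2 * (n : ℝ) * Real.log n / Real.log γ')) <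
      Real.exp (-((n : ℝ) * Real.log n)) := by
  have hN : 0 < n.choose k := Nat.choose_pos hkn
  have hq0 : 0 < q := hp.trans_le hpq
  have hr : 0 < p * q := mul_pos hp hq0
  have hr1 : p * q ≤ 1 := by nlinarith
  have hμ : 0 < p * q * n.choose k := by positivity
  have hnlogn : 0 < (n : ℝ) * log n := by linarith
  have hγ1 : 1 < γ' := by
    rw [hγ', lt_div_iff₀ hμ]
    nlinarith [exp_one_gt_d9]
  have hlam' : lam = exp 1 * (γ' / log γ') * (n.choose k * (p * q)) := by
    rw [hlam, hγ', show exp 2 = exp 1 * exp 1 by rw [← exp_add]; norm_num]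
    field_simp
  refine ⟨?_, by simpa only [mul_assoc] using rpow_neg_lt_exp_neg hγ1 hnlogn⟩
  have htail := binomial_upper_tail_le_div_log_rpow _ hN hr hr1 hγ1
  rw [← hlam'] at htail
  refine htail.trans_eq ?_
  rw [hlam]
  ring_nf

/-- tail bound for a binomial random variable `X ~ Bin(C(n,k), pq)`,
with `γ' = 4e·n·log n/(pq·C(n,k))` and `λ = 4e²·n·log n/log γ'`.
`P[X > λ]` is written out as the explicit binomial tail sum. -/
theorem stmt13 (n k : ℕ) (hk : 2 ≤ k) (hkn : k ≤ n) (p q : ℝ)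
    (hp : 0 < p) (hpq : p ≤ q) (hq : q ≤ 1)
    (hsparse : p * q * (n.choose k) ≤ 4 * (n : ℝ) * Real.log n)
    (γ' lam : ℝ)
    (hγ' : γ' = 4 * Real.exp 1 * ((n : ℝ) * Real.log n) / (p * q * (n.choose k)))
    (hlam : lam = 4 * Real.exp 2 * ((n : ℝ) * Real.log n) / Real.log γ') :
    (∑ t ∈ (Finset.range (n.choose k + 1)).filter (fun t : ℕ => lam < (t : ℝ)),
        ((n.choose k).choose t : ℝ) * (p * q) ^ t * (1 - p * q) ^ (n.choose k - t)) ≤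
      (γ' / Real.log γ') ^ (-(4 * Real.exp 2 * (n : ℝ) * Real.log n / Real.log γ')) ∧
    (γ' / Real.log γ') ^ (-(4 * Real.exp 2 * (n : ℝ) * Real.log n / Real.log γ')) <
      Real.exp (-((n : ℝ) * Real.log n)) :=
  stmt13_general n k hkn p q hp hpq hq hsparse γ' lam hγ' hlam
end
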